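/- arXiv:2104.07443 — 4 statements merged into one kernel-verified Lean document; each statement's English description precedes it below -/
import Mathlib

section
/- Let f : ℕ → ℂ be an additive arithmetic function (i.e. f(mn) = f(m) + f(n) whenever gcd(m,n) = 1, so in particular f(1) = 0), let k ≥ 1 be an integer and let n₁, …, n_k be positive integers. Then f(lcm(n₁,…,n_k)) = Σ_{j=1}^{k} (−1)^{j−1} Σ_{1 ≤ i₁ < ⋯ < i_j ≤ k} f(gcd(n_{i₁},…,n_{i_j})); equivalently, f of the lcm equals the sum over all nonempty subsets S of {1,…,k} of (−1)^{|S|−1} · f(gcd of the n_i with i ∈ S). -/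
/-!
Write `m = ∏ p ^ vₚ(m)`. Additivity gives `f m = ∑ₚ f (p ^ vₚ(m))`, and telescoping
`f (p ^ v) = ∑_{j < v} (f (p ^ (j + 1)) - f (p ^ j))` turns `f m` into a sum of jumps of `f`
over the prime-power divisors `p ^ (j + 1)` of `m`. A prime power divides an lcm iff it divides
one of the numbers, and divides a gcd iff it divides all of them, so the prime-power divisors of
the lcm are the union of those of the `nᵢ`, and those of a gcd are their intersection.
The identity is therefore the inclusion-exclusion principle for sums over a finite union of finite sets.
-/

open Finset

namespace Finset

theorem factorization_gcd {ι : Type*} {s : Finset ι} (hs : s.Nonempty) {n : ι → ℕ}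
    (hn : ∀ i ∈ s, n i ≠ 0) (p : ℕ) :
    (s.gcd n).factorization p = s.inf' hs fun i => (n i).factorization p := by
  induction hs using Nonempty.cons_induction with
  | singleton a => simp
  | cons a s ha hs ih =>
    have hna : n a ≠ 0 := hn a (mem_cons_self a s)
    have hns : ∀ i ∈ s, n i ≠ 0 := fun i hi => hn i (mem_cons_of_mem hi)
    have hgcd : s.gcd n ≠ 0 :=
      gcd_ne_zero_iff.2 (hs.exists_mem.imp fun i hi => ⟨hi, hns i hi⟩)
    rw [gcd_cons, inf'_cons hs, ← ih hns, gcd_eq_nat_gcd, Nat.factorization_gcd hna hgcd,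
      Finsupp.inf_apply]

end Finset

/-- `⟨p, j⟩` stands for the prime-power divisor `p ^ (j + 1)` of `m`. -/
def primePowerDivisorPairs (m : ℕ) : Finset (Σ _ : ℕ, ℕ) :=
  m.primeFactors.sigma fun p => range (m.factorization p)

theorem mem_primePowerDivisorPairs {m : ℕ} {x : Σ _ : ℕ, ℕ} :
    x ∈ primePowerDivisorPairs m ↔ x.2 < m.factorization x.1 := by
  simp only [primePowerDivisorPairs, mem_sigma, mem_range, ← Nat.support_factorization,
    Finsupp.mem_support_iff]
  omega

section Lattice

variable {ι : Type*} {s : Finset ι} {n : ι → ℕ}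

theorem primePowerDivisorPairs_lcm (hn : ∀ i ∈ s, n i ≠ 0) :
    primePowerDivisorPairs (s.lcm n) = s.biUnion fun i => primePowerDivisorPairs (n i) := by
  ext x
  simp only [mem_biUnion, mem_primePowerDivisorPairs, factorization_lcm hn, Finset.lt_sup_iff]

theorem primePowerDivisorPairs_gcd (hs : s.Nonempty) (hn : ∀ i ∈ s, n i ≠ 0) :
    primePowerDivisorPairs (s.gcd n) = s.inf' hs fun i => primePowerDivisorPairs (n i) := by
  ext x
  simp only [mem_inf', mem_primePowerDivisorPairs, factorization_gcd hs hn, lt_inf'_iff]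

end Lattice

section AdditiveFunction

variable {G : Type*} [AddCommGroup G] {f : ℕ → G}

theorem map_one_eq_zero_of_additive
    (hf : ∀ m n : ℕ, Nat.Coprime m n → f (m * n) = f m + f n) :
    f 1 = 0 := by
  simpa using hf 1 1 (Nat.coprime_one_left 1)

theorem map_prod_eq_sum_of_additive (hf : ∀ m n : ℕ, Nat.Coprime m n → f (m * n) = f m + f n)
    {ι : Type*} (s : Finset ι) (g : ι → ℕ)
    (hg : (s : Set ι).Pairwise (Function.onFun Nat.Coprime g)) :
    f (∏ i ∈ s, g i) = ∑ i ∈ s, f (g i) := by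
  induction s using Finset.cons_induction with
  | empty => simpa using map_one_eq_zero_of_additive hf
  | cons a s ha ih =>
    rw [coe_cons, Set.pairwise_insert] at hg
    have hcop : Nat.Coprime (g a) (∏ i ∈ s, g i) :=
      Nat.Coprime.prod_right fun i hi => (hg.2 i hi (by rintro rfl; exact ha hi)).1
    rw [prod_cons, sum_cons, hf _ _ hcop, ih hg.1]

theorem map_eq_sum_primeFactors_of_additive
    (hf : ∀ m n : ℕ, Nat.Coprime m n → f (m * n) = f m + f n) {m : ℕ} (hm : m ≠ 0) :
    f m = ∑ p ∈ m.primeFactors, f (p ^ m.factorization p) := by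
  conv_lhs => rw [← Nat.prod_factorization_pow_eq_self hm]
  rw [Finsupp.prod, Nat.support_factorization]
  exact map_prod_eq_sum_of_additive hf _ _ fun p hp q hq hpq =>
    ((Nat.coprime_primes (Nat.prime_of_mem_primeFactors hp)
      (Nat.prime_of_mem_primeFactors hq)).2 hpq).pow _ _

theorem map_eq_sum_primePowerDivisorPairs_of_additive
    (hf : ∀ m n : ℕ, Nat.Coprime m n → f (m * n) = f m + f n) {m : ℕ} (hm : m ≠ 0) :
    f m = ∑ x ∈ primePowerDivisorPairs m, (f (x.1 ^ (x.2 + 1)) - f (x.1 ^ x.2)) := by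
  rw [primePowerDivisorPairs, sum_sigma, map_eq_sum_primeFactors_of_additive hf hm]
  refine sum_congr rfl fun p _ => ?_
  rw [sum_range_sub (fun j => f (p ^ j)), pow_zero, map_one_eq_zero_of_additive hf, sub_zero]

theorem map_lcm_eq_sum_gcd_of_additive
    (hf : ∀ m n : ℕ, Nat.Coprime m n → f (m * n) = f m + f n)
    {ι : Type*} (s : Finset ι) (n : ι → ℕ) (hn : ∀ i ∈ s, n i ≠ 0) :
    f (s.lcm n) = ∑ t ∈ s.powerset.filter (·.Nonempty), (-1 : ℤ) ^ (#t - 1) • f (t.gcd n) := by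
  rw [map_eq_sum_primePowerDivisorPairs_of_additive hf (lcm_ne_zero_iff.2 hn),
    primePowerDivisorPairs_lcm hn, inclusion_exclusion_sum_biUnion,
    ← sum_coe_sort (s.powerset.filter (·.Nonempty))]
  refine sum_congr rfl fun t _ => ?_
  obtain ⟨hts, ht⟩ := mem_filter.1 t.2
  have hnt : ∀ i ∈ t.1, n i ≠ 0 := fun i hi => hn i (mem_powerset.1 hts hi)
  have hgcd : t.1.gcd n ≠ 0 := gcd_ne_zero_iff.2 (ht.exists_mem.imp fun i hi => ⟨hi, hnt i hi⟩)
  have hsign : #t.1 + 1 = #t.1 - 1 + 2 := by have := ht.card_pos; omega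
  rw [← primePowerDivisorPairs_gcd ht hnt,
    ← map_eq_sum_primePowerDivisorPairs_of_additive hf hgcd, hsign, pow_add, neg_one_sq, mul_one]

end AdditiveFunction

theorem stmt_0_general (f : ℕ → ℂ)
    (hf : ∀ m n : ℕ, Nat.Coprime m n → f (m * n) = f m + f n)
    (k : ℕ) (n : Fin k → ℕ) (hn : ∀ i, 1 ≤ n i) :
    f (Finset.univ.lcm n) =
      ∑ S ∈ Finset.univ.powerset.filter (fun S : Finset (Fin k) => S.Nonempty),
        (-1 : ℂ) ^ (S.card - 1) * f (S.gcd n) := by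
  rw [map_lcm_eq_sum_gcd_of_additive hf univ n fun i _ => Nat.one_le_iff_ne_zero.1 (hn i)]
  simp only [zsmul_eq_mul, Int.cast_pow, Int.cast_neg, Int.cast_one]

/-- **Inclusion-exclusion identity for additive arithmetic functions.**
If `f : ℕ → ℂ` is additive (i.e. `f (m * n) = f m + f n` whenever `gcd m n = 1`),
`k ≥ 1` and `n₁, …, n_k` are positive integers, then `f` of the lcm of the `nᵢ`
equals the alternating sum, over all nonempty subsets `S` of `{1, …, k}`, of
`(-1)^(|S|-1) * f (gcd of the nᵢ, i ∈ S)`. -/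
theorem stmt_0 (f : ℕ → ℂ)
    (hf : ∀ m n : ℕ, Nat.Coprime m n → f (m * n) = f m + f n)
    (k : ℕ) (hk : 1 ≤ k) (n : Fin k → ℕ) (hn : ∀ i, 1 ≤ n i) :
    f (Finset.univ.lcm n) =
      ∑ S ∈ Finset.univ.powerset.filter (fun S : Finset (Fin k) => S.Nonempty),
        (-1 : ℂ) ^ (S.card - 1) * f (S.gcd n) :=
  stmt_0_general f hf k n hn
end

section
/- Let g : ℕ → ℂ be a multiplicative arithmetic function with g(n) ≠ 0 for all n ≥ 1, let k ≥ 1 be an integer and let n₁, …, n_k be positive integers. Then g(lcm(n₁,…,n_k)) = ∏_{j=1}^{k} ( ∏_{1 ≤ i₁ < ⋯ < i_j ≤ k} g(gcd(n_{i₁},…,n_{i_j})) )^{(−1)^{j−1}}; equivalently, g(lcm(n₁,…,n_k)) · ∏_{S ⊆ {1,…,k}, |S| even, S ≠ ∅} g(gcd_{i∈S} n_i) = ∏_{S ⊆ {1,…,k}, |S| odd} g(gcd_{i∈S} n_i). -/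
/-!
Inserting a new index `a` into the index set splits the subsets into those avoiding `a` and
those containing it; the gcds over the latter are the gcds of the family `gcd(nᵢ, n_a)`, whose
lcm is `gcd(lcm n, n_a)` by distributivity of the divisibility lattice. So by induction on the
index set (for all families at once) the identity reduces to
`g (lcm a b) * g (gcd a b) = g a * g b`, which holds prime by prime for multiplicative `g`.
-/

open Finset

theorem Nat.gcd_lcm_distrib_right (a b c : ℕ) :
    Nat.gcd (Nat.lcm a b) c = Nat.lcm (Nat.gcd a c) (Nat.gcd b c) := by
  rcases eq_or_ne a 0 with rfl | ha
  · simp [Nat.lcm_eq_left (Nat.gcd_dvd_right b c)]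
  rcases eq_or_ne b 0 with rfl | hb
  · simp [Nat.lcm_eq_right (Nat.gcd_dvd_right a c)]
  rcases eq_or_ne c 0 with rfl | hc
  · simp
  have hac := Nat.gcd_ne_zero_right (m := a) hc
  have hbc := Nat.gcd_ne_zero_right (m := b) hc
  refine Nat.factorization_inj (Nat.gcd_ne_zero_right hc) (Nat.lcm_ne_zero hac hbc) ?_
  simp only [Nat.factorization_gcd (Nat.lcm_ne_zero ha hb) hc, Nat.factorization_lcm ha hb,
    Nat.factorization_lcm hac hbc, Nat.factorization_gcd ha hc, Nat.factorization_gcd hb hc]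
  ext p
  exact inf_sup_right ..

theorem lcm_apply_mul_gcd_apply_of_multiplicative {R : Type*} [CommMonoidWithZero R]
    (g : ℕ → R) (hg1 : g 1 = 1) (hg : ∀ m n : ℕ, Nat.Coprime m n → g (m * n) = g m * g n)
    (a b : ℕ) : g (Nat.lcm a b) * g (Nat.gcd a b) = g a * g b := by
  rcases eq_or_ne a 0 with rfl | ha
  · simp [mul_comm]
  rcases eq_or_ne b 0 with rfl | hb
  · simp [mul_comm]
  let f : ArithmeticFunction R := ⟨fun n => if n = 0 then 0 else g n, if_pos rfl⟩
  have hf : f.IsMultiplicative := by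
    refine ⟨by simp [f, hg1], fun {m n} hmn => ?_⟩
    rcases eq_or_ne m 0 with rfl | hm
    · simp [f]
    rcases eq_or_ne n 0 with rfl | hn
    · simp [f]
    simp [f, hm, hn, hg m n hmn]
  simpa [f, ha, hb, Nat.lcm_ne_zero, Nat.gcd_ne_zero_left] using
    hf.lcm_apply_mul_gcd_apply (x := a) (y := b)

namespace Finset

variable {ι : Type*}

theorem Nonempty.gcd_gcd_distrib_right {s : Finset ι} (hs : s.Nonempty) (f : ι → ℕ) (m : ℕ) :
    Nat.gcd (s.gcd f) m = s.gcd fun i => Nat.gcd (f i) m := by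
  induction hs using Nonempty.cons_induction with
  | singleton a => simp
  | cons a s ha hs ih =>
    rw [gcd_cons, gcd_cons, ← ih]
    change Nat.gcd (Nat.gcd (f a) (s.gcd f)) m = Nat.gcd (Nat.gcd (f a) m) (Nat.gcd (s.gcd f) m)
    grind [Nat.gcd_comm, Nat.gcd_assoc, Nat.gcd_self]

theorem Nonempty.gcd_insert_eq_gcd_gcd [DecidableEq ι] {t : Finset ι} (ht : t.Nonempty)
    (n : ι → ℕ) (a : ι) : (insert a t).gcd n = t.gcd fun i => Nat.gcd (n i) (n a) := by
  rw [gcd_insert, ← ht.gcd_gcd_distrib_right]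
  exact Nat.gcd_comm _ _

theorem gcd_lcm_distrib_right [DecidableEq ι] (s : Finset ι) (f : ι → ℕ) (m : ℕ) :
    Nat.gcd (s.lcm f) m = s.lcm fun i => Nat.gcd (f i) m := by
  induction s using Finset.induction with
  | empty => simp
  | insert a s ha ih =>
    rw [lcm_insert, lcm_insert, ← ih]
    exact Nat.gcd_lcm_distrib_right ..

variable {M : Type*} [CommMonoid M]

theorem prod_powerset_insert_filter [DecidableEq ι] {s : Finset ι} {a : ι} (ha : a ∉ s)
    (P : Finset ι → Prop) [DecidablePred P] (f : Finset ι → M) :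
    ∏ t ∈ (insert a s).powerset with P t, f t =
      (∏ t ∈ s.powerset with P t, f t) * ∏ t ∈ s.powerset with P (insert a t), f (insert a t) := by
  simp only [prod_filter]
  exact prod_powerset_insert ha _

theorem prod_powerset_filter_even_card (s : Finset ι) (f : Finset ι → M) :
    ∏ t ∈ s.powerset with Even t.card, f t =
      f ∅ * ∏ t ∈ s.powerset with t.Nonempty ∧ Even t.card, f t := by
  classical
  have : {t ∈ s.powerset | Even t.card} =
      insert ∅ {t ∈ s.powerset | t.Nonempty ∧ Even t.card} := by
    ext t
    rcases t.eq_empty_or_nonempty with rfl | ht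
    · simp
    · simp [ht, ht.ne_empty]
  rw [this, prod_insert (by simp)]

end Finset

section InclusionExclusion

variable {ι M : Type*} [DecidableEq ι] [CommMonoid M] (G : ℕ → M)

def evenGcdProd (s : Finset ι) (n : ι → ℕ) : M :=
  ∏ S ∈ s.powerset with S.Nonempty ∧ Even S.card, G (S.gcd n)

def oddGcdProd (s : Finset ι) (n : ι → ℕ) : M :=
  ∏ S ∈ s.powerset with Odd S.card, G (S.gcd n)

variable {G} {s : Finset ι} {a : ι}

theorem evenGcdProd_insert (ha : a ∉ s) (n : ι → ℕ) :
    evenGcdProd G (insert a s) n =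
      evenGcdProd G s n * oddGcdProd G s fun i => Nat.gcd (n i) (n a) := by
  unfold evenGcdProd oddGcdProd
  rw [prod_powerset_insert_filter ha]
  refine congrArg _ (prod_congr (filter_congr fun t ht => ?_) fun t ht => ?_)
  · simp [card_insert_of_notMem fun h => ha (mem_powerset.1 ht h), Nat.even_add_one]
  · exact congrArg G ((card_pos.1 (mem_filter.1 ht).2.pos).gcd_insert_eq_gcd_gcd n a)

theorem oddGcdProd_insert (ha : a ∉ s) (n : ι → ℕ) :
    oddGcdProd G (insert a s) n =
      oddGcdProd G s n * (G (n a) * evenGcdProd G s fun i => Nat.gcd (n i) (n a)) := by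
  unfold evenGcdProd oddGcdProd
  rw [prod_powerset_insert_filter ha]
  have hfilter : ∀ t ∈ s.powerset, Odd (insert a t).card ↔ Even t.card := fun t ht => by
    simp [card_insert_of_notMem fun h => ha (mem_powerset.1 ht h), Nat.odd_add_one]
  rw [filter_congr hfilter, prod_powerset_filter_even_card, insert_empty_eq,
    gcd_singleton, normalize_eq]
  refine congrArg _ (congrArg _ (prod_congr rfl fun t ht => ?_))
  exact congrArg G ((mem_filter.1 ht).2.1.gcd_insert_eq_gcd_gcd n a)

theorem lcm_mul_evenGcdProd (h1 : G 1 = 1)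
    (hG : ∀ a b, G (Nat.lcm a b) * G (Nat.gcd a b) = G a * G b) (s : Finset ι) (n : ι → ℕ) :
    G (s.lcm n) * evenGcdProd G s n = oddGcdProd G s n := by
  induction s using Finset.induction generalizing n with
  | empty => simp [evenGcdProd, oddGcdProd, filter_singleton, h1]
  | insert a s ha ih =>
    set n' := fun i => Nat.gcd (n i) (n a)
    have hL' : s.lcm n' = Nat.gcd (n a) (s.lcm n) := by rw [Nat.gcd_comm, gcd_lcm_distrib_right]
    rw [evenGcdProd_insert ha, oddGcdProd_insert ha, ← ih n, ← ih n', hL', lcm_insert]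
    set E := evenGcdProd G s n
    set E' := evenGcdProd G s n'
    calc G (GCDMonoid.lcm (n a) (s.lcm n)) * (E * (G (Nat.gcd (n a) (s.lcm n)) * E'))
        = G (Nat.lcm (n a) (s.lcm n)) * G (Nat.gcd (n a) (s.lcm n)) * (E * E') := by ac_rfl
      _ = G (n a) * G (s.lcm n) * (E * E') := by rw [hG]
      _ = G (s.lcm n) * E * (G (n a) * E') := by ac_rfl

end InclusionExclusion

theorem stmt_1_general (g : ℕ → ℂ) (hg1 : g 1 = 1)
    (hg : ∀ m n : ℕ, Nat.Coprime m n → g (m * n) = g m * g n)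
    (k : ℕ) (n : Fin k → ℕ) :
    g (Finset.univ.lcm n) *
      ∏ S ∈ Finset.univ.powerset.filter
          (fun S : Finset (Fin k) => S.Nonempty ∧ Even S.card), g (S.gcd n) =
    ∏ S ∈ Finset.univ.powerset.filter
          (fun S : Finset (Fin k) => Odd S.card), g (S.gcd n) :=
  lcm_mul_evenGcdProd hg1 (lcm_apply_mul_gcd_apply_of_multiplicative g hg1 hg) univ n

/-- **Inclusion-exclusion identity for nonvanishing multiplicative functions.**
If `g : ℕ → ℂ` is multiplicative (`g 1 = 1` and `g (m * n) = g m * g n` whenever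
`gcd m n = 1`) and never vanishes on positive integers, `k ≥ 1`, and
`n₁, …, n_k` are positive integers, then
`g (lcm) = ∏_{j=1}^{k} (∏_{1 ≤ i₁ < ⋯ < i_j ≤ k} g (gcd(n_{i₁},…,n_{i_j})))^{(−1)^{j−1}}`,
stated equivalently without inverses as:
`g (lcm) * ∏_{S nonempty, |S| even} g (gcd_{i ∈ S} n_i) = ∏_{S, |S| odd} g (gcd_{i ∈ S} n_i)`. -/
theorem stmt_1 (g : ℕ → ℂ) (hg1 : g 1 = 1)
    (hg : ∀ m n : ℕ, Nat.Coprime m n → g (m * n) = g m * g n)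
    (hne : ∀ n : ℕ, 1 ≤ n → g n ≠ 0)
    (k : ℕ) (hk : 1 ≤ k) (n : Fin k → ℕ) (hn : ∀ i, 1 ≤ n i) :
    g (Finset.univ.lcm n) *
      ∏ S ∈ Finset.univ.powerset.filter
          (fun S : Finset (Fin k) => S.Nonempty ∧ Even S.card), g (S.gcd n) =
    ∏ S ∈ Finset.univ.powerset.filter
          (fun S : Finset (Fin k) => Odd S.card), g (S.gcd n) :=
  stmt_1_general g hg1 hg k n
end

section
/- Let f : ℕ → ℂ be an additive arithmetic function, let k ≥ 1 be an integer and let x ≥ 1 be a real number. Then Σ_{n₁,…,n_k ≤ x} f(gcd(n₁,…,n_k)) = Σ_{p^ν ≤ x, ν ≥ 1} ( f(p^ν) − f(p^{ν−1}) ) · ⌊x/p^ν⌋^k, where the right-hand sum ranges over all prime powers p^ν ≤ x with p prime and ν ≥ 1. -/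
/-!
Additivity and telescoping give `f n = ∑_{p^ν ∣ n} (f (p^ν) - f (p^(ν-1)))` for every `n ≥ 1`.
Apply this to `n = gcd (n₁, …, n_k)` and swap the sums: `p^ν` divides the gcd iff it divides
every `n_i`, and `[1, x]` contains `⌊x / p^ν⌋` multiples of `p^ν`, so the coefficient of
`f (p^ν) - f (p^(ν-1))` is `⌊x / p^ν⌋ ^ k`.
-/

open Finset

section Additive

variable {G : Type*} [AddCommGroup G] {f : ℕ → G}

theorem map_one_of_additive (hf : ∀ m n : ℕ, m.Coprime n → f (m * n) = f m + f n) : f 1 = 0 := by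
  simpa using hf 1 1 (Nat.coprime_one_left 1)

theorem eq_factorization_sum_of_additive (hf : ∀ m n : ℕ, m.Coprime n → f (m * n) = f m + f n)
    {n : ℕ} (hn : n ≠ 0) : f n = n.factorization.sum fun p e => f (p ^ e) :=
  Nat.multiplicative_factorization (fun n => Multiplicative.ofAdd (f n))
    (fun a b hab => congrArg Multiplicative.ofAdd (hf a b hab))
    (congrArg Multiplicative.ofAdd (map_one_of_additive hf)) hn

theorem sum_Icc_one_sub_pred (g : ℕ → G) (v : ℕ) :
    ∑ i ∈ Icc 1 v, (g i - g (i - 1)) = g v - g 0 := by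
  induction v with
  | zero => simp
  | succ v ih => rw [sum_Icc_succ_top (by omega), ih]; simp

theorem sum_Icc_prime_pow_dvd (hf : ∀ m n : ℕ, m.Coprime n → f (m * n) = f m + f n)
    {n N : ℕ} (hn : n ≠ 0) (hnN : n ≤ N) (p : ℕ) :
    ∑ ν ∈ Icc 1 N, (if p.Prime ∧ p ^ ν ∣ n then f (p ^ ν) - f (p ^ (ν - 1)) else 0) =
      f (p ^ n.factorization p) := by
  by_cases hp : p.Prime
  · have hfilter : {ν ∈ Icc 1 N | p.Prime ∧ p ^ ν ∣ n} = Icc 1 (n.factorization p) := by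
      have := (Nat.factorization_lt p hn).trans_le hnN
      ext ν
      simp only [mem_filter, mem_Icc, hp, true_and, hp.pow_dvd_iff_le_factorization hn]
      omega
    rw [← sum_filter, hfilter, sum_Icc_one_sub_pred (fun ν => f (p ^ ν)), pow_zero,
      map_one_of_additive hf, sub_zero]
  · simp [hp, Nat.factorization_eq_zero_of_not_prime, map_one_of_additive hf]

theorem eq_sum_prime_pow_dvd (hf : ∀ m n : ℕ, m.Coprime n → f (m * n) = f m + f n)
    {n N : ℕ} (hn : n ≠ 0) (hnN : n ≤ N) :
    f n = ∑ p ∈ Icc 1 N, ∑ ν ∈ Icc 1 N,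
      if p.Prime ∧ p ^ ν ∣ n then f (p ^ ν) - f (p ^ (ν - 1)) else 0 := by
  have hsupp : n.primeFactors ⊆ Icc 1 N := fun p hp =>
    mem_Icc.2 ⟨(Nat.prime_of_mem_primeFactors hp).one_le,
      (Nat.le_of_mem_primeFactors hp).trans hnN⟩
  simp only [sum_Icc_prime_pow_dvd hf hn hnN]
  rw [eq_factorization_sum_of_additive hf hn,
    Finsupp.sum_of_support_subset _ hsupp _ fun p _ => by simp [map_one_of_additive hf]]

end Additive

section Tuples

variable {ι : Type*} [DecidableEq ι] [Fintype ι]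

theorem gcd_ne_zero_and_le_of_mem_piFinset [Nonempty ι] {N : ℕ} {n : ι → ℕ}
    (hn : n ∈ Fintype.piFinset fun _ => Icc 1 N) : univ.gcd n ≠ 0 ∧ univ.gcd n ≤ N := by
  obtain ⟨i⟩ := ‹Nonempty ι›
  have hi := mem_Icc.1 (Fintype.mem_piFinset.1 hn i)
  have hdvd : univ.gcd n ∣ n i := gcd_dvd (mem_univ i)
  exact ⟨(Nat.pos_of_dvd_of_pos hdvd hi.1).ne', (Nat.le_of_dvd hi.1 hdvd).trans hi.2⟩

theorem card_filter_dvd_gcd_piFinset (m N : ℕ) :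
    #{n ∈ Fintype.piFinset fun _ : ι => Icc 1 N | m ∣ univ.gcd n} = (N / m) ^ Fintype.card ι := by
  have hfilter : {n ∈ Fintype.piFinset fun _ : ι => Icc 1 N | m ∣ univ.gcd n} =
      Fintype.piFinset fun _ => {a ∈ Icc 1 N | m ∣ a} := by
    ext n
    simp [Finset.dvd_gcd_iff, forall_and]
  have hIcc : Icc 1 N = Ioc 0 N := Icc_add_one_left_eq_Ioc 0 N
  rw [hfilter, Fintype.card_piFinset, prod_const, card_univ, hIcc,
    Nat.Ioc_filter_dvd_card_eq_div]

end Tuples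

theorem ite_le_mul_floor_div_pow {R : Type*} [Semiring R] (c : R) (x : ℝ) {m k : ℕ}
    (hm : m ≠ 0) (hk : k ≠ 0) :
    (if (m : ℝ) ≤ x then c * (⌊x / m⌋₊ : R) ^ k else 0) = c * ((⌊x⌋₊ / m : ℕ) : R) ^ k := by
  split_ifs with hmx
  · rw [Nat.floor_div_natCast]
  · rw [Nat.div_eq_of_lt ((Nat.floor_lt' hm).2 (not_le.1 hmx)), Nat.cast_zero, zero_pow hk,
      mul_zero]

theorem stmt_3_general (f : ℕ → ℂ)
    (hf : ∀ m n : ℕ, Nat.Coprime m n → f (m * n) = f m + f n)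
    (k : ℕ) (hk : 1 ≤ k) (x : ℝ) :
    ∑ n ∈ Fintype.piFinset (fun _ : Fin k => Finset.Icc 1 ⌊x⌋₊),
        f (Finset.univ.gcd n) =
      ∑ p ∈ Finset.Icc 1 ⌊x⌋₊, ∑ ν ∈ Finset.Icc 1 ⌊x⌋₊,
        if p.Prime ∧ ((p : ℝ) ^ ν ≤ x) then
          (f (p ^ ν) - f (p ^ (ν - 1))) * (⌊x / (p : ℝ) ^ ν⌋₊ : ℂ) ^ k
        else 0 := by
  have : Nonempty (Fin k) := ⟨⟨0, hk⟩⟩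
  calc _ = ∑ n ∈ Fintype.piFinset (fun _ : Fin k => Icc 1 ⌊x⌋₊), ∑ p ∈ Icc 1 ⌊x⌋₊,
        ∑ ν ∈ Icc 1 ⌊x⌋₊, if p.Prime ∧ p ^ ν ∣ univ.gcd n then
          f (p ^ ν) - f (p ^ (ν - 1)) else 0 :=
        sum_congr rfl fun n hn =>
          let ⟨hn0, hnN⟩ := gcd_ne_zero_and_le_of_mem_piFinset hn
          eq_sum_prime_pow_dvd hf hn0 hnN
    _ = ∑ p ∈ Icc 1 ⌊x⌋₊, ∑ ν ∈ Icc 1 ⌊x⌋₊,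
        ∑ n ∈ Fintype.piFinset (fun _ : Fin k => Icc 1 ⌊x⌋₊),
          if p.Prime ∧ p ^ ν ∣ univ.gcd n then f (p ^ ν) - f (p ^ (ν - 1)) else 0 := by
        rw [sum_comm]
        exact sum_congr rfl fun p _ => sum_comm
    _ = _ := by
      refine sum_congr rfl fun p _ => sum_congr rfl fun ν _ => ?_
      by_cases hp : p.Prime
      · simp only [hp, true_and]
        rw [← sum_filter, sum_const, card_filter_dvd_gcd_piFinset, Fintype.card_fin,
          nsmul_eq_mul, mul_comm, ← Nat.cast_pow, ite_le_mul_floor_div_pow _ _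
            (pow_ne_zero ν hp.ne_zero) (Nat.one_le_iff_ne_zero.1 hk), Nat.cast_pow]
      · simp [hp]

/-- For an additive function `f : ℕ → ℂ`, integer `k ≥ 1` and real `x ≥ 1`:
`Σ_{n₁,…,n_k ≤ x} f (gcd (n₁,…,n_k))
  = Σ_{p^ν ≤ x, p prime, ν ≥ 1} (f (p^ν) − f (p^{ν−1})) ⌊x / p^ν⌋^k`.
(The ranges `p, ν ∈ [1, ⌊x⌋]` are harmless: any prime power `p^ν ≤ x` has
`p ≤ x` and `ν < 2^ν ≤ p^ν ≤ x`.) -/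
theorem stmt_3 (f : ℕ → ℂ)
    (hf : ∀ m n : ℕ, Nat.Coprime m n → f (m * n) = f m + f n)
    (k : ℕ) (hk : 1 ≤ k) (x : ℝ) (hx : 1 ≤ x) :
    ∑ n ∈ Fintype.piFinset (fun _ : Fin k => Finset.Icc 1 ⌊x⌋₊),
        f (Finset.univ.gcd n) =
      ∑ p ∈ Finset.Icc 1 ⌊x⌋₊, ∑ ν ∈ Finset.Icc 1 ⌊x⌋₊,
        if p.Prime ∧ ((p : ℝ) ^ ν ≤ x) then
          (f (p ^ ν) - f (p ^ (ν - 1))) * (⌊x / (p : ℝ) ^ ν⌋₊ : ℂ) ^ k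
        else 0 :=
  stmt_3_general f hf k hk x
end

section
/- Let ℓ ≥ 1 be a fixed integer. Then there exist constants C > 0 and x₀ ≥ 3 such that for all real x ≥ x₀: Σ_{p ≤ x^{1/2}} Σ_{ν > log x / log p} ν^ℓ / p^{ν} ≤ C / ( x^{1/2} (log x)² ), where the outer sum ranges over primes p ≤ √x and the inner sum over integers ν > log x / log p. -/
/-!
For `p ≤ √x` every `ν` in the inner sum has `p ^ ν > x`, and also `p ^ ν ≥ p ^ 3` and
`p ^ ν ≥ 2 ^ ν`. Splitting `p ^ (-ν)` accordingly as
`(p ^ ν) ^ (-13/24) (p ^ ν) ^ (-3/8) (p ^ ν) ^ (-1/12) ≤ x ^ (-13/24) p ^ (-9/8) (2 ^ (-1/12)) ^ ν`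
bounds the double sum by `x ^ (-13/24)` times the convergent sums `∑ n ^ (-9/8)` and
`∑ ν ^ ℓ (2 ^ (-1/12)) ^ ν`, and `x ^ (-13/24)` beats `1 / (√x (log x) ^ 2)` since
`(log x) ^ 2 = o(x ^ (1/24))`.
-/

open Real Filter

lemma inv_le_rpow_mul_rpow_mul_rpow {a b c Q α β γ : ℝ} (ha : 0 < a) (hb : 0 < b) (hc : 0 < c)
    (haQ : a ≤ Q) (hbQ : b ≤ Q) (hcQ : c ≤ Q) (hα : 0 ≤ α) (hβ : 0 ≤ β) (hγ : 0 ≤ γ)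
    (hαβγ : α + β + γ = 1) :
    Q⁻¹ ≤ a ^ (-α) * b ^ (-β) * c ^ (-γ) := by
  have hQ : 0 < Q := ha.trans_le haQ
  calc Q⁻¹ = Q ^ (-α) * Q ^ (-β) * Q ^ (-γ) := by
        rw [← rpow_add hQ, ← rpow_add hQ, ← neg_add, ← neg_add, hαβγ, rpow_neg_one]
    _ ≤ a ^ (-α) * b ^ (-β) * c ^ (-γ) := by
        gcongr ?_ * ?_ * ?_
        · exact rpow_le_rpow_of_nonpos ha haQ (neg_nonpos.2 hα)
        · exact rpow_le_rpow_of_nonpos hb hbQ (neg_nonpos.2 hβ)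
        · exact rpow_le_rpow_of_nonpos hc hcQ (neg_nonpos.2 hγ)

lemma pow_div_pow_le_of_sq_le_of_lt_pow {p x : ℝ} (l ν : ℕ) (hp : 2 ≤ p) (hx : 0 < x)
    (hpx : p ^ 2 ≤ x) (hxν : x < p ^ ν) :
    ν ^ l / p ^ ν ≤ x ^ (-(13 / 24) : ℝ) * p ^ (-(9 / 8) : ℝ) *
      (ν ^ l * ((2 : ℝ) ^ (-(1 / 12) : ℝ)) ^ ν) := by
  have hp0 : 0 < p := by linarith
  have hν : 3 ≤ ν := (pow_lt_pow_iff_right₀ (by linarith)).1 (hpx.trans_lt hxν)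
  have hinv := inv_le_rpow_mul_rpow_mul_rpow (α := 13 / 24) (β := 3 / 8) (γ := 1 / 12)
    hx (pow_pos hp0 3) (pow_pos two_pos ν) hxν.le (pow_le_pow_right₀ (by linarith) hν)
    (pow_le_pow_left₀ zero_le_two hp ν) (by norm_num) (by norm_num) (by norm_num) (by norm_num)
  rw [← rpow_natCast p 3, ← rpow_mul hp0.le, ← rpow_natCast (2 : ℝ) ν, ← rpow_mul zero_le_two,
    mul_comm (ν : ℝ), rpow_mul zero_le_two, rpow_natCast] at hinv
  norm_num at hinv
  calc (ν : ℝ) ^ l / p ^ ν = ν ^ l * (p ^ ν)⁻¹ := div_eq_mul_inv _ _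
    _ ≤ ν ^ l * (x ^ (-(13 / 24) : ℝ) * p ^ (-(9 / 8) : ℝ) *
          ((2 : ℝ) ^ (-(1 / 12) : ℝ)) ^ ν) := by gcongr
    _ = _ := by ring

lemma summable_pow_mul_two_rpow_pow (l : ℕ) :
    Summable fun ν : ℕ => (ν : ℝ) ^ l * ((2 : ℝ) ^ (-(1 / 12) : ℝ)) ^ ν := by
  refine summable_pow_mul_geometric_of_norm_lt_one l ?_
  rw [Real.norm_of_nonneg (rpow_nonneg zero_le_two _)]
  exact rpow_lt_one_of_one_lt_of_neg one_lt_two (by norm_num)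

lemma tsum_ite_pow_div_pow_le {p x : ℝ} (l : ℕ) (hp : 2 ≤ p) (hx : 0 < x) (hpx : p ^ 2 ≤ x) :
    ∑' ν : ℕ, (if log x / log p < ν then (ν : ℝ) ^ l / p ^ ν else 0) ≤
      x ^ (-(13 / 24) : ℝ) * p ^ (-(9 / 8) : ℝ) *
        ∑' ν : ℕ, (ν : ℝ) ^ l * ((2 : ℝ) ^ (-(1 / 12) : ℝ)) ^ ν := by
  have hp0 : 0 < p := by linarith
  have hlogp : 0 < log p := log_pos (by linarith)
  have hg := (summable_pow_mul_two_rpow_pow l).mul_left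
    (x ^ (-(13 / 24) : ℝ) * p ^ (-(9 / 8) : ℝ))
  have hterm : ∀ ν : ℕ, (if log x / log p < ν then (ν : ℝ) ^ l / p ^ ν else 0) ≤
      x ^ (-(13 / 24) : ℝ) * p ^ (-(9 / 8) : ℝ) * (ν ^ l * ((2 : ℝ) ^ (-(1 / 12) : ℝ)) ^ ν) := by
    intro ν
    split_ifs with hν
    · have hxν : x < p ^ ν := by
        rwa [div_lt_iff₀ hlogp, ← log_pow, log_lt_log_iff hx (pow_pos hp0 ν)] at hν
      exact pow_div_pow_le_of_sq_le_of_lt_pow l ν hp hx hpx hxν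
    · positivity
  have hnonneg : ∀ ν : ℕ, 0 ≤ (if log x / log p < ν then (ν : ℝ) ^ l / p ^ ν else 0) := by
    intro ν
    split_ifs <;> positivity
  rw [← tsum_mul_left]
  exact (Summable.of_nonneg_of_le hnonneg hterm hg).tsum_le_tsum hterm hg

lemma sum_primes_tsum_ite_pow_div_pow_le (l : ℕ) {x : ℝ} (hx : 0 < x) :
    ∑ p ∈ Finset.filter Nat.Prime (Finset.Icc 1 ⌊√x⌋₊),
        (∑' ν : ℕ, if log x / log p < (ν : ℝ) then (ν : ℝ) ^ l / (p : ℝ) ^ ν else 0) ≤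
      x ^ (-(13 / 24) : ℝ) * ((∑' n : ℕ, (n : ℝ) ^ (-(9 / 8) : ℝ)) *
        ∑' ν : ℕ, (ν : ℝ) ^ l * ((2 : ℝ) ^ (-(1 / 12) : ℝ)) ^ ν) := by
  set S := ∑' ν : ℕ, (ν : ℝ) ^ l * ((2 : ℝ) ^ (-(1 / 12) : ℝ)) ^ ν
  have hS : 0 ≤ S := tsum_nonneg fun ν => by positivity
  calc _ ≤ ∑ p ∈ Finset.filter Nat.Prime (Finset.Icc 1 ⌊√x⌋₊),
        x ^ (-(13 / 24) : ℝ) * (p : ℝ) ^ (-(9 / 8) : ℝ) * S := by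
        refine Finset.sum_le_sum fun p hp => tsum_ite_pow_div_pow_le l ?_ hx ?_
        · exact_mod_cast (Finset.mem_filter.1 hp).2.two_le
        · have hp_sqrt : (p : ℝ) ≤ √x :=
            (Nat.cast_le.2 (Finset.mem_Icc.1 (Finset.mem_filter.1 hp).1).2).trans
              (Nat.floor_le (sqrt_nonneg x))
          simpa using (le_sqrt (Nat.cast_nonneg p) hx.le).1 hp_sqrt
    _ = x ^ (-(13 / 24) : ℝ) *
        ((∑ p ∈ Finset.filter Nat.Prime (Finset.Icc 1 ⌊√x⌋₊), (p : ℝ) ^ (-(9 / 8) : ℝ)) * S) := by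
        rw [Finset.sum_mul, Finset.mul_sum]
        exact Finset.sum_congr rfl fun _ _ => by ring
    _ ≤ _ := by
        gcongr
        exact (summable_nat_rpow.2 (by norm_num)).sum_le_tsum _ fun n _ => by positivity

lemma eventually_sqrt_mul_log_sq_le_rpow :
    ∀ᶠ x : ℝ in atTop, √x * log x ^ 2 ≤ x ^ (13 / 24 : ℝ) := by
  filter_upwards [(isLittleO_log_rpow_rpow_atTop 2 (by norm_num : (0 : ℝ) < 1 / 24)).bound one_pos,
    eventually_ge_atTop 0] with x hlog hx
  rw [rpow_two, one_mul, Real.norm_of_nonneg (sq_nonneg _),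
    Real.norm_of_nonneg (rpow_nonneg hx _)] at hlog
  calc √x * log x ^ 2 ≤ x ^ (1 / 2 : ℝ) * x ^ (1 / 24 : ℝ) := by
        rw [sqrt_eq_rpow]
        gcongr
    _ = x ^ (13 / 24 : ℝ) := by rw [← rpow_add' hx (by norm_num)]; norm_num

theorem stmt_7_general (l : ℕ) :
    ∃ C > (0 : ℝ), ∃ x₀ : ℝ, 3 ≤ x₀ ∧ ∀ x ≥ x₀,
      ∑ p ∈ Finset.filter Nat.Prime (Finset.Icc 1 ⌊Real.sqrt x⌋₊),
        (∑' ν : ℕ, if Real.log x / Real.log p < (ν : ℝ) then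
            (ν : ℝ) ^ l / (p : ℝ) ^ ν else 0) ≤
        C / (Real.sqrt x * (Real.log x) ^ 2) := by
  have hA : 0 < ∑' n : ℕ, (n : ℝ) ^ (-(9 / 8) : ℝ) :=
    (summable_nat_rpow.2 (by norm_num)).tsum_pos (fun n => by positivity) 1 (by simp)
  have hS : 0 < ∑' ν : ℕ, (ν : ℝ) ^ l * ((2 : ℝ) ^ (-(1 / 12) : ℝ)) ^ ν :=
    (summable_pow_mul_two_rpow_pow l).tsum_pos (fun ν => by positivity) 1 (by simp; positivity)
  set C := (∑' n : ℕ, (n : ℝ) ^ (-(9 / 8) : ℝ)) *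
    ∑' ν : ℕ, (ν : ℝ) ^ l * ((2 : ℝ) ^ (-(1 / 12) : ℝ)) ^ ν
  have hC : 0 < C := mul_pos hA hS
  obtain ⟨x₁, hx₁⟩ := eventually_atTop.1 eventually_sqrt_mul_log_sq_le_rpow
  refine ⟨C, hC, max x₁ 3, le_max_right _ _, fun x hx => ?_⟩
  have hx3 : 3 ≤ x := le_of_max_le_right hx
  have hden : 0 < √x * log x ^ 2 := by
    have := log_pos (by linarith : (1 : ℝ) < x)
    positivity
  calc _ ≤ x ^ (-(13 / 24) : ℝ) * C := sum_primes_tsum_ite_pow_div_pow_le l (by linarith)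
    _ = C / x ^ (13 / 24 : ℝ) := by rw [rpow_neg (by linarith)]; ring
    _ ≤ C / (√x * log x ^ 2) :=
        div_le_div_of_nonneg_left hC.le hden (hx₁ x (le_of_max_le_left hx))

/-- For a fixed integer `ℓ ≥ 1` there are `C > 0` and `x₀ ≥ 3` such that for all
`x ≥ x₀`: `Σ_{p ≤ √x} Σ_{ν > log x / log p} ν^ℓ / p^ν ≤ C / (x^{1/2} (log x)²)`,
the outer sum over primes `p ≤ √x`, the inner over integers `ν > log x / log p`. -/
theorem stmt_7 (l : ℕ) (hl : 1 ≤ l) :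
    ∃ C > (0 : ℝ), ∃ x₀ : ℝ, 3 ≤ x₀ ∧ ∀ x ≥ x₀,
      ∑ p ∈ Finset.filter Nat.Prime (Finset.Icc 1 ⌊Real.sqrt x⌋₊),
        (∑' ν : ℕ, if Real.log x / Real.log p < (ν : ℝ) then
            (ν : ℝ) ^ l / (p : ℝ) ^ ν else 0) ≤
        C / (Real.sqrt x * (Real.log x) ^ 2) :=
  stmt_7_general l
end
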